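/- arXiv:2501.09515 — 2 statements merged into one kernel-verified Lean document; each statement's English description precedes it below -/
import Mathlib

section
/- Let p be an odd prime and let L/L⁺ be a cyclic Galois extension of number fields of degree p−1 with Gal(L/L⁺) = ⟨γ⟩ and an isomorphism φ: Gal(L/L⁺) → F_p^×. Let 𝔯 be a prime ideal of L⁺ and let 𝔯₁,…,𝔯_k be the primes of L above 𝔯, permuted by γ. Suppose l ∈ L^× satisfies l^γ ≡ l^{φ(γ)} modulo (L^×)^p, and write the part of the fractional ideal (l) supported above 𝔯 as ∏_{i=1}^k 𝔯_i^{α_i} with this product not a p-th power of a fractional ideal. Then k = p−1. -/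
/-!
Pick `i₀` with `p ∤ α i₀`, so that the `𝔯_{i₀}`-adic valuation of `l` is `α i₀`, a unit mod `p`.
The Galois group is cyclic, hence abelian, and acts transitively on the `k` primes above `𝔯`;
so the stabiliser of `𝔯_{i₀}` has index `k`, giving `k ∣ p - 1` and `γ ^ k • 𝔯_{i₀} = 𝔯_{i₀}`.
Iterating the hypothesis on `l` gives `γ ^ k • l = l ^ (φ(γ) ^ k) * m ^ p`; comparing
`𝔯_{i₀}`-adic valuations of both sides gives `α i₀ ≡ φ(γ) ^ k * α i₀ (mod p)`, hence
`φ(γ) ^ k = 1` and `p - 1 = orderOf (φ γ)` divides `k`.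
-/

open NumberField nonZeroDivisors
open scoped Pointwise

theorem MulAction.pow_ncard_orbit_smul {G X : Type*} [Group G] [IsMulCommutative G]
    [MulAction G X] (g : G) (x : X) : g ^ (orbit G x).ncard • x = x := by
  rw [← index_stabilizer, ← mem_stabilizer_iff]
  exact (stabilizer G x).pow_index_mem g

theorem exists_prod_zpow_eq_pow_of_forall_dvd {M ι : Type*} [DivisionCommMonoid M]
    (s : Finset ι) (x : ι → M) (e : ι → ℤ) {n : ℕ} (h : ∀ i ∈ s, (n : ℤ) ∣ e i) :
    ∃ J : M, ∏ i ∈ s, x i ^ e i = J ^ n := by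
  refine ⟨∏ i ∈ s, x i ^ (e i / n), ?_⟩
  rw [← Finset.prod_pow]
  refine Finset.prod_congr rfl fun i hi => ?_
  rw [← zpow_natCast, ← zpow_mul, Int.ediv_mul_cancel (h i hi)]

theorem exists_pow_smul_eq_pow_mul_pow {G M : Type*} [Monoid G] [CommMonoid M]
    [MulDistribMulAction G M] {g : G} {l : M} {e p : ℕ} {m : Mˣ}
    (h : g • l = l ^ e * (m : M) ^ p) (n : ℕ) :
    ∃ m' : Mˣ, g ^ n • l = l ^ e ^ n * (m' : M) ^ p := by
  induction n with
  | zero => exact ⟨1, by simp⟩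
  | succ n ih =>
    obtain ⟨m', hm'⟩ := ih
    refine ⟨m ^ e ^ n * Units.map (MulDistribMulAction.toMonoidHom M g) m', ?_⟩
    rw [pow_succ', mul_smul, hm', smul_mul', smul_pow', smul_pow', h]
    simp only [Units.val_mul, Units.val_pow_eq_pow_val, Units.coe_map,
      MulDistribMulAction.toMonoidHom_apply]
    rw [mul_pow, mul_pow, ← pow_mul, ← pow_mul, ← pow_mul, pow_succ', mul_comm p]
    ac_rfl

theorem ZMod.natCast_eq_one_of_eq_mul_add {p : ℕ} [Fact p.Prime] {a c : ℤ} {e : ℕ}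
    (ha : ¬ (p : ℤ) ∣ a) (h : a = e * a + p * c) : (e : ZMod p) = 1 := by
  have h' := congrArg (fun z : ℤ => (z : ZMod p)) h
  push_cast at h'
  rw [ZMod.natCast_self, zero_mul, add_zero] at h'
  have ha' : (a : ZMod p) ≠ 0 := by rwa [ne_eq, ZMod.intCast_zmod_eq_zero_iff_dvd]
  exact (mul_eq_right₀ ha').mp h'.symm

theorem Ideal.mem_primesOver_iff_of_ne_bot {A B : Type*} [CommRing A] [CommRing B] [Algebra A B]
    [FaithfulSMul A B] {p : Ideal A} (hp : p ≠ ⊥) {Q : Ideal B} :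
    Q ∈ p.primesOver B ↔ Q.IsPrime ∧ Q ≠ ⊥ ∧ Q.comap (algebraMap A B) = p := by
  rw [primesOver, Set.mem_ofPred_eq, liesOver_iff, under_def, eq_comm (a := p)]
  refine ⟨fun ⟨hQ, h⟩ => ⟨hQ, ?_, h⟩, fun ⟨hQ, _, h⟩ => ⟨hQ, h⟩⟩
  rintro rfl
  exact hp (h ▸ under_bot A B)

theorem Associates.count_factors_map {α F : Type*} [CommMonoidWithZero α]
    [UniqueFactorizationMonoid α] [DecidableEq (Associates α)]
    [∀ p : Associates α, Decidable (Irreducible p)] [EquivLike F α α] [MulEquivClass F α α]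
    (f : F) {p a : α} (hp : Irreducible p) (ha : a ≠ 0) :
    (Associates.mk (f p)).count (Associates.mk (f a)).factors =
      (Associates.mk p).count (Associates.mk a).factors := by
  have hfp : Irreducible (Associates.mk (f p)) := irreducible_mk.mpr (hp.map f)
  have hfa : Associates.mk (f a) ≠ 0 := by simpa using ha
  refine eq_of_forall_le_iff fun n => ?_
  rw [← prime_pow_dvd_iff_le hfa hfp, ← prime_pow_dvd_iff_le (by simpa using ha)
    (irreducible_mk.mpr hp), ← mk_pow, ← mk_pow, mk_le_mk_iff_dvd, mk_le_mk_iff_dvd, ← map_pow,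
    map_dvd_iff]

namespace FractionalIdeal

open IsDedekindDomain

variable {S K : Type*} [CommRing S] [IsDedekindDomain S] [Field K] [Algebra S K]
  [IsFractionRing S K]

theorem count_coe_eq_zero_of_not_dvd (v : HeightOneSpectrum S) {J : Ideal S}
    (h : ¬ v.asIdeal ∣ J) : count K v J = 0 := by
  classical
  have hJ : J ≠ 0 := by rintro rfl; exact h (dvd_zero _)
  rw [count_coe K v hJ, Nat.cast_eq_zero]
  by_contra hcount
  exact h ((Associates.count_ne_zero_iff_dvd hJ v.irreducible).mp hcount)

theorem count_prod_zpow_of_injective {ι : Type*} [Fintype ι] {v : ι → HeightOneSpectrum S}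
    (hv : Function.Injective v) (α : ι → ℤ) (i : ι) :
    count K (v i) (∏ j, ((v j).asIdeal : FractionalIdeal S⁰ K) ^ α j) = α i := by
  classical
  rw [count_prod K (v i) _ _ fun j _ => zpow_ne_zero _ (coeIdeal_ne_zero.mpr (v j).ne_bot)]
  simp only [count_zpow, count_maximal, hv.eq_iff, mul_ite, mul_one, mul_zero,
    Finset.sum_ite_eq', Finset.mem_univ, if_true]

theorem count_prod_zpow_mul_div {ι : Type*} [Fintype ι] {v : ι → HeightOneSpectrum S}
    (hv : Function.Injective v) (α : ι → ℤ) {A B : Ideal S} {i : ι}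
    (hA : ¬ (v i).asIdeal ∣ A) (hB : ¬ (v i).asIdeal ∣ B) :
    count K (v i) ((∏ j, ((v j).asIdeal : FractionalIdeal S⁰ K) ^ α j) *
      ((A : FractionalIdeal S⁰ K) / B)) = α i := by
  have hA0 : (A : FractionalIdeal S⁰ K) ≠ 0 := by
    rw [coeIdeal_ne_zero]; rintro rfl; exact hA (dvd_zero _)
  have hB0 : (B : FractionalIdeal S⁰ K) ≠ 0 := by
    rw [coeIdeal_ne_zero]; rintro rfl; exact hB (dvd_zero _)
  rw [count_mul K _ (Finset.prod_ne_zero_iff.mpr fun j _ =>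
      zpow_ne_zero _ (coeIdeal_ne_zero.mpr (v j).ne_bot)) (div_ne_zero hA0 hB0),
    div_eq_mul_inv, count_mul K _ hA0 (inv_ne_zero hB0), count_inv,
    count_coe_eq_zero_of_not_dvd _ hA, count_coe_eq_zero_of_not_dvd _ hB,
    count_prod_zpow_of_injective hv]
  ring

theorem count_spanSingleton_pow_mul_pow (v : HeightOneSpectrum S) {x y : K} (hx : x ≠ 0)
    (hy : y ≠ 0) (a b : ℕ) :
    count K v (spanSingleton S⁰ (x ^ a * y ^ b)) =
      a * count K v (spanSingleton S⁰ x) + b * count K v (spanSingleton S⁰ y) := by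
  rw [← spanSingleton_mul_spanSingleton, ← spanSingleton_pow, ← spanSingleton_pow,
    count_mul K v (pow_ne_zero _ (spanSingleton_ne_zero_iff.mpr hx))
      (pow_ne_zero _ (spanSingleton_ne_zero_iff.mpr hy)), count_pow, count_pow]

theorem count_spanSingleton_algebraMap_div (v : HeightOneSpectrum S) {a b : S} (ha : a ≠ 0)
    (hb : b ≠ 0) :
    count K v (spanSingleton S⁰ (algebraMap S K a / algebraMap S K b)) =
      count K v (Ideal.span {a}) - count K v (Ideal.span {b}) := by
  have hspan {c : S} (hc : c ≠ 0) : ((Ideal.span {c} : Ideal S) : FractionalIdeal S⁰ K) ≠ 0 := by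
    rwa [coeIdeal_ne_zero, ne_eq, Ideal.span_singleton_eq_bot]
  rw [← spanSingleton_div_spanSingleton, ← coeIdeal_span_singleton, ← coeIdeal_span_singleton,
    div_eq_mul_inv, count_mul K v (hspan ha) (inv_ne_zero (hspan hb)), count_inv, sub_eq_add_neg]

variable {G : Type*} [Group G] [MulSemiringAction G S]

theorem count_coe_smul (σ : G) {v w : HeightOneSpectrum S} (hw : w.asIdeal = σ • v.asIdeal)
    (J : Ideal S) : count K w ((σ • J : Ideal S) : FractionalIdeal S⁰ K) = count K v J := by
  classical
  rcases eq_or_ne J 0 with rfl | hJ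
  · rw [Ideal.zero_eq_bot, Ideal.smul_bot, coeIdeal_bot, count_zero, count_zero]
  rw [count_coe K w ((smul_ne_zero_iff_ne σ).mpr hJ), count_coe K v hJ, hw]
  exact_mod_cast Associates.count_factors_map (MulSemiringAction.toRingEquiv G (Ideal S) σ)
    v.irreducible hJ

variable [MulSemiringAction G K] [SMulDistribClass G S K]

theorem count_spanSingleton_smul (σ : G) {v w : HeightOneSpectrum S}
    (hw : w.asIdeal = σ • v.asIdeal) (x : K) :
    count K w (spanSingleton S⁰ (σ • x)) = count K v (spanSingleton S⁰ x) := by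
  rcases eq_or_ne x 0 with rfl | hx
  · rw [smul_zero, spanSingleton_zero, count_zero, count_zero]
  obtain ⟨a, b, hb, rfl⟩ := IsFractionRing.div_surjective (A := S) x
  have hb0 : b ≠ 0 := nonZeroDivisors.ne_zero hb
  have ha0 : a ≠ 0 := by rintro rfl; simp at hx
  rw [smul_div₀', ← algebraMap.smul', ← algebraMap.smul',
    count_spanSingleton_algebraMap_div w ((smul_ne_zero_iff_ne σ).mpr ha0)
      ((smul_ne_zero_iff_ne σ).mpr hb0),
    count_spanSingleton_algebraMap_div v ha0 hb0, ← Set.smul_set_singleton,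
    ← Set.smul_set_singleton, ← Ideal.smul_closure, ← Ideal.smul_closure,
    count_coe_smul σ hw, count_coe_smul σ hw]

theorem natCast_eq_one_of_smul_eq_pow_mul_pow {p : ℕ} [Fact p.Prime] (σ : G)
    {v : HeightOneSpectrum S} (hσv : σ • v.asIdeal = v.asIdeal) {x y : K} (hx : x ≠ 0)
    (hy : y ≠ 0) {e : ℕ} (h : σ • x = x ^ e * y ^ p)
    (hxv : ¬ (p : ℤ) ∣ count K v (spanSingleton S⁰ x)) : (e : ZMod p) = 1 := by
  have hcount := count_spanSingleton_smul σ hσv.symm x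
  rw [h, count_spanSingleton_pow_mul_pow v hx hy] at hcount
  exact ZMod.natCast_eq_one_of_eq_mul_add hxv hcount.symm

end FractionalIdeal

theorem stmt_0_general (p : ℕ) (hp : p.Prime)
    (Lplus L : Type) [Field Lplus] [NumberField Lplus] [Field L] [NumberField L]
    [Algebra Lplus L] [IsGalois Lplus L] (hdeg : Module.finrank Lplus L = p - 1)
    (γ : L ≃ₐ[Lplus] L) (hγ : ∀ g : L ≃ₐ[Lplus] L, g ∈ Subgroup.zpowers γ)
    (φ : (L ≃ₐ[Lplus] L) ≃* (ZMod p)ˣ)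
    (𝔯 : Ideal (𝓞 Lplus)) (h𝔯0 : 𝔯 ≠ ⊥)
    (k : ℕ) (R : Fin k → Ideal (𝓞 L)) (hRinj : Function.Injective R)
    (hAbove : ∀ Q : Ideal (𝓞 L),
      (Q.IsPrime ∧ Q ≠ ⊥ ∧ Ideal.comap (algebraMap (𝓞 Lplus) (𝓞 L)) Q = 𝔯) ↔ ∃ i, Q = R i)
    (l : Lˣ)
    (hSel : ∃ m : Lˣ, γ (l : L) = (l : L) ^ (((φ γ : (ZMod p)ˣ) : ZMod p).val) * (m : L) ^ p)
    (α : Fin k → ℤ) (A B : Ideal (𝓞 L))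
    (hcop : ∀ i, ¬ (R i ∣ A) ∧ ¬ (R i ∣ B))
    (hdecomp : FractionalIdeal.spanSingleton (𝓞 L)⁰ (l : L) =
      (∏ i : Fin k, ((R i : FractionalIdeal (𝓞 L)⁰ L) ^ (α i))) *
        ((A : FractionalIdeal (𝓞 L)⁰ L) / (B : FractionalIdeal (𝓞 L)⁰ L)))
    (hnp : ¬ ∃ J : FractionalIdeal (𝓞 L)⁰ L,
      (∏ i : Fin k, ((R i : FractionalIdeal (𝓞 L)⁰ L) ^ (α i))) = J ^ p) :
    k = p - 1 := by
  have : Fact p.Prime := ⟨hp⟩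
  have : FiniteDimensional Lplus L := Module.finite_of_finrank_pos (by have := hp.two_le; omega)
  have : IsGaloisGroup (L ≃ₐ[Lplus] L) (𝓞 Lplus) (𝓞 L) := .of_isFractionRing _ _ _ Lplus L
  have : IsCyclic (L ≃ₐ[Lplus] L) := ⟨γ, hγ⟩
  have hcard : Nat.card (L ≃ₐ[Lplus] L) = p - 1 := by rw [IsGalois.card_aut_eq_finrank, hdeg]
  obtain ⟨i₀, hi₀⟩ : ∃ i, ¬ (p : ℤ) ∣ α i := by
    by_contra! h
    exact hnp (exists_prod_zpow_eq_pow_of_forall_dvd _ _ _ fun i _ => h i)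
  have hR i := (hAbove (R i)).mpr ⟨i, rfl⟩
  have hrange : Set.range R = 𝔯.primesOver (𝓞 L) := by
    ext Q
    rw [Ideal.mem_primesOver_iff_of_ne_bot h𝔯0, hAbove, Set.mem_range]
    simp only [eq_comm]
  have hk : (MulAction.orbit (L ≃ₐ[Lplus] L) (R i₀)).ncard = k := by
    have : (R i₀).IsPrime := (hR i₀).1
    have : (R i₀).LiesOver 𝔯 := ⟨(hR i₀).2.2.symm⟩
    rw [Algebra.IsInvariant.orbit_eq_primesOver (𝓞 Lplus) (𝓞 L) _ 𝔯 (R i₀), ← hrange,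
      Set.ncard_range_of_injective hRinj, Nat.card_fin]
  have hk_dvd : k ∣ p - 1 := by
    rw [← hk, ← MulAction.index_stabilizer, ← hcard]
    exact Subgroup.index_dvd_card _
  let v (i : Fin k) : IsDedekindDomain.HeightOneSpectrum (𝓞 L) := ⟨R i, (hR i).1, (hR i).2.1⟩
  have hv : Function.Injective v := fun i j h => hRinj (congrArg (·.asIdeal) h)
  have hl : FractionalIdeal.count L (v i₀) (.spanSingleton _ (l : L)) = α i₀ := by
    rw [hdecomp]
    exact FractionalIdeal.count_prod_zpow_mul_div hv α (hcop i₀).1 (hcop i₀).2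
  obtain ⟨m, hm⟩ := hSel
  obtain ⟨m', hm'⟩ := exists_pow_smul_eq_pow_mul_pow (g := γ) hm k
  have hφ : φ γ ^ k = 1 := by
    have := FractionalIdeal.natCast_eq_one_of_smul_eq_pow_mul_pow (γ ^ k) (v := v i₀)
      (hk ▸ MulAction.pow_ncard_orbit_smul γ (R i₀)) l.ne_zero m'.ne_zero hm' (hl ▸ hi₀)
    ext
    simpa using this
  have hdvd_k : p - 1 ∣ k := by
    rw [← hcard, ← orderOf_eq_card_of_forall_mem_zpowers hγ, ← MulEquiv.orderOf_eq φ]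
    exact orderOf_dvd_of_pow_eq_one hφ
  exact Nat.dvd_antisymm hk_dvd hdvd_k

/-- Let `L/L⁺` be a cyclic Galois extension of number fields of degree
`p − 1` (`p` an odd prime) with `Gal(L/L⁺) = ⟨γ⟩` and an isomorphism
`φ : Gal(L/L⁺) ≃ F_p^×`. Let `𝔯` be a (nonzero) prime of `L⁺` and `𝔯_1, …, 𝔯_k` the
primes of `L` above `𝔯`. If `l ∈ L^×` satisfies `l^γ ≡ l^{φ(γ)} mod (L^×)^p` and the
part of the fractional ideal `(l)` supported above `𝔯` is `∏ 𝔯_i^{α_i}`, not a `p`-th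
power of a fractional ideal, then `k = p − 1`. -/
theorem stmt_0 (p : ℕ) (hp : p.Prime) (hodd : Odd p)
    (Lplus L : Type) [Field Lplus] [NumberField Lplus] [Field L] [NumberField L]
    [Algebra Lplus L] [IsGalois Lplus L] (hdeg : Module.finrank Lplus L = p - 1)
    (γ : L ≃ₐ[Lplus] L) (hγ : ∀ g : L ≃ₐ[Lplus] L, g ∈ Subgroup.zpowers γ)
    (φ : (L ≃ₐ[Lplus] L) ≃* (ZMod p)ˣ)
    (𝔯 : Ideal (𝓞 Lplus)) (h𝔯 : 𝔯.IsPrime) (h𝔯0 : 𝔯 ≠ ⊥)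
    (k : ℕ) (R : Fin k → Ideal (𝓞 L)) (hRinj : Function.Injective R)
    (hAbove : ∀ Q : Ideal (𝓞 L),
      (Q.IsPrime ∧ Q ≠ ⊥ ∧ Ideal.comap (algebraMap (𝓞 Lplus) (𝓞 L)) Q = 𝔯) ↔ ∃ i, Q = R i)
    (l : Lˣ)
    (hSel : ∃ m : Lˣ, γ (l : L) = (l : L) ^ (((φ γ : (ZMod p)ˣ) : ZMod p).val) * (m : L) ^ p)
    (α : Fin k → ℤ) (A B : Ideal (𝓞 L))
    (hcop : ∀ i, ¬ (R i ∣ A) ∧ ¬ (R i ∣ B))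
    (hdecomp : FractionalIdeal.spanSingleton (𝓞 L)⁰ (l : L) =
      (∏ i : Fin k, ((R i : FractionalIdeal (𝓞 L)⁰ L) ^ (α i))) *
        ((A : FractionalIdeal (𝓞 L)⁰ L) / (B : FractionalIdeal (𝓞 L)⁰ L)))
    (hnp : ¬ ∃ J : FractionalIdeal (𝓞 L)⁰ L,
      (∏ i : Fin k, ((R i : FractionalIdeal (𝓞 L)⁰ L) ^ (α i))) = J ^ p) :
    k = p - 1 :=
  stmt_0_general p hp Lplus L hdeg γ hγ φ 𝔯 h𝔯0 k R hRinj hAbove l hSel α A B hcop hdecomp hnp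
end

section
/- Let p be an odd prime, G = ⟨γ⟩ a cyclic group of order p−1 acting on a finite set {𝔯₁,…,𝔯_k} transitively-compatibly via an index action, and φ: G → F_p^× an isomorphism. If integers α₁,…,α_k (not all divisible by p) satisfy α_i ≡ φ(γ)·α_{γ·i} (mod p) for all i, where γ acts on indices by a permutation, then the order of γ on the orbit of any index i with α_i ≢ 0 (mod p) equals p−1; in particular p−1 divides k. -/
/-!
Iterating `α i = e * α (γ i)` along the orbit of `i` gives `α i = e ^ m * α i` for the
minimal period `m` of `i`, so `e ^ m = 1` as soon as `α i ≠ 0`. Hence the order `p - 1` of `e`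
divides `m`, while `m ∣ p - 1` because `γ ^ (p - 1) = 1`. Transitivity makes the orbit of `i`
everything, so `m = k`.
-/

open Function MulAction

section

variable {ι M : Type*} {f : ι → ι} {α : ι → M} {c : M}

theorem eq_pow_mul_iterate [Monoid M] (h : ∀ i, α i = c * α (f i)) (n : ℕ) (i : ι) :
    α i = c ^ n * α (f^[n] i) := by
  induction n generalizing i with
  | zero => simp
  | succ n ih => rw [h i, ih (f i), iterate_succ_apply, pow_succ', mul_assoc]

theorem orderOf_dvd_minimalPeriod [MonoidWithZero M] [IsRightCancelMulZero M] (h : ∀ i, α i = c * α (f i))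
    {i : ι} (hi : α i ≠ 0) : orderOf c ∣ minimalPeriod f i := by
  have hcycle := eq_pow_mul_iterate h (minimalPeriod f i) i
  rw [iterate_minimalPeriod] at hcycle
  exact orderOf_dvd_of_pow_eq_one ((mul_eq_right₀ hi).1 hcycle.symm)

end

theorem Equiv.Perm.minimalPeriod_eq_card_of_forall_iterate {ι : Type*} [Fintype ι]
    (σ : Equiv.Perm ι) (i : ι) (h : ∀ j, ∃ n : ℕ, σ^[n] i = j) :
    minimalPeriod σ i = Fintype.card ι := by
  classical
  have horbit : ∀ j, j ∈ orbit (Subgroup.zpowers σ) i := fun j => by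
    obtain ⟨n, rfl⟩ := h j
    exact ⟨⟨σ ^ n, Subgroup.npow_mem_zpowers σ n⟩, by simp [Equiv.Perm.iterate_eq_pow]⟩
  rw [← Fintype.card_congr (Equiv.subtypeUnivEquiv horbit)]
  exact minimalPeriod_eq_card (a := σ) (b := i)

theorem stmt_1_general (p k : ℕ) (hp : p.Prime)
    (γ : Equiv.Perm (Fin k)) (hγ : γ ^ (p - 1) = 1)
    (htrans : ∀ i j : Fin k, ∃ n : ℕ, (⇑γ)^[n] i = j)
    (e : (ZMod p)ˣ) (he : orderOf e = p - 1)
    (α : Fin k → ZMod p) (hα0 : ∃ i, α i ≠ 0)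
    (hα : ∀ i, α i = (e : ZMod p) * α (γ i)) :
    (∀ i, α i ≠ 0 → Function.minimalPeriod (⇑γ) i = p - 1) ∧ (p - 1) ∣ k := by
  have := Fact.mk hp
  have hperiod : ∀ i, α i ≠ 0 → minimalPeriod γ i = p - 1 := by
    intro i hi
    apply Nat.dvd_antisymm
    · exact (pow_smul_eq_iff_minimalPeriod_dvd (a := γ)).1 (by rw [hγ, one_smul])
    · rw [← he, ← orderOf_units]
      exact orderOf_dvd_minimalPeriod hα hi
  obtain ⟨i, hi⟩ := hα0
  refine ⟨hperiod, ?_⟩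
  rw [← hperiod i hi, γ.minimalPeriod_eq_card_of_forall_iterate i (htrans i), Fintype.card_fin]

/-- combinatorial core of the `p`-descent support argument. A generator `γ`
of a cyclic group of order `p−1` permutes the indices `{1, …, k}` (transitively), `e = φ(γ)`
is a generator of `F_p^×`, and the exponent vector `α` (not all zero mod `p`) satisfies
`α i = e * α (γ i)`. Then the order of `γ` on the orbit of any index `i` with `α i ≠ 0`
is `p−1`, and in particular `p−1 ∣ k`. -/
theorem stmt_1 (p k : ℕ) (hp : p.Prime) (hodd : Odd p) (hk : 0 < k)
    (γ : Equiv.Perm (Fin k)) (hγ : γ ^ (p - 1) = 1)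
    (htrans : ∀ i j : Fin k, ∃ n : ℕ, (⇑γ)^[n] i = j)
    (e : (ZMod p)ˣ) (he : orderOf e = p - 1)
    (α : Fin k → ZMod p) (hα0 : ∃ i, α i ≠ 0)
    (hα : ∀ i, α i = (e : ZMod p) * α (γ i)) :
    (∀ i, α i ≠ 0 → Function.minimalPeriod (⇑γ) i = p - 1) ∧ (p - 1) ∣ k :=
  stmt_1_general p k hp γ hγ htrans e he α hα0 hα
end
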